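/- arXiv:2211.14754 — 3 statements merged into one kernel-verified Lean document; each statement's English description precedes it below -/
import Mathlib

section
/- Let A and B be unital associative k-algebras and let τ : B⊗A → A⊗B be a twisting map. Then the twisted tensor product A⊗_τ B, i.e. the vector space A⊗B equipped with multiplication ∇_{A⊗_τ B} = (∇_A⊗∇_B)∘(1_A⊗τ⊗1_B) and unit η_{A⊗_τ B} = (η_A⊗η_B)∘(k ≅ k⊗k), is a unital associative k-algebra. -/
open scoped TensorProduct

namespace TTP

section Defs

variable (k : Type*) [Field k]

section MidMap

variable {X P Q Y R S : Type*}
  [AddCommGroup X] [Module k X] [AddCommGroup P] [Module k P]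
  [AddCommGroup Q] [Module k Q] [AddCommGroup Y] [Module k Y]
  [AddCommGroup R] [Module k R] [AddCommGroup S] [Module k S]

/-- The map `1_X ⊗ f ⊗ 1_Y` (with the canonical reassociations). -/
noncomputable def midMap (f : P ⊗[k] Q →ₗ[k] R ⊗[k] S) :
    (X ⊗[k] P) ⊗[k] (Q ⊗[k] Y) →ₗ[k] (X ⊗[k] R) ⊗[k] (S ⊗[k] Y) :=
  (TensorProduct.assoc k (X ⊗[k] R) S Y).toLinearMap
    ∘ₗ TensorProduct.map (TensorProduct.assoc k X R S).symm.toLinearMap LinearMap.id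
    ∘ₗ TensorProduct.map (TensorProduct.map LinearMap.id f) LinearMap.id
    ∘ₗ TensorProduct.map (TensorProduct.assoc k X P Q).toLinearMap LinearMap.id
    ∘ₗ (TensorProduct.assoc k (X ⊗[k] P) Q Y).symm.toLinearMap

end MidMap

variable {A B : Type*} [AddCommGroup A] [Module k A] [AddCommGroup B] [Module k B]

/-- `(A, mul, unit)` is a unital associative `k`-algebra (diagrammatically). -/
def IsUnitalAssoc (mul : A ⊗[k] A →ₗ[k] A) (unit : k →ₗ[k] A) : Prop :=
  mul ∘ₗ TensorProduct.map unit LinearMap.id ∘ₗ (TensorProduct.lid k A).symm.toLinearMap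
      = LinearMap.id
  ∧ mul ∘ₗ TensorProduct.map LinearMap.id unit ∘ₗ (TensorProduct.rid k A).symm.toLinearMap
      = LinearMap.id
  ∧ mul ∘ₗ TensorProduct.map mul LinearMap.id
      = mul ∘ₗ TensorProduct.map LinearMap.id mul ∘ₗ (TensorProduct.assoc k A A A).toLinearMap

/-- `(A, comul, counit)` is a counital coassociative `k`-coalgebra (diagrammatically). -/
def IsCounitalCoassoc (comul : A →ₗ[k] A ⊗[k] A) (counit : A →ₗ[k] k) : Prop :=
  (TensorProduct.lid k A).toLinearMap ∘ₗ TensorProduct.map counit LinearMap.id ∘ₗ comul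
      = LinearMap.id
  ∧ (TensorProduct.rid k A).toLinearMap ∘ₗ TensorProduct.map LinearMap.id counit ∘ₗ comul
      = LinearMap.id
  ∧ TensorProduct.map comul LinearMap.id ∘ₗ comul
      = (TensorProduct.assoc k A A A).symm.toLinearMap
          ∘ₗ TensorProduct.map LinearMap.id comul ∘ₗ comul

/-- `τ : B ⊗ A → A ⊗ B` is a twisting map for the algebras `A` and `B`:
it is compatible with both units and with both multiplications. -/
def IsTwisting (mulA : A ⊗[k] A →ₗ[k] A) (unitA : k →ₗ[k] A)
    (mulB : B ⊗[k] B →ₗ[k] B) (unitB : k →ₗ[k] B)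
    (τ : B ⊗[k] A →ₗ[k] A ⊗[k] B) : Prop :=
  τ ∘ₗ TensorProduct.map LinearMap.id unitA
      = TensorProduct.map unitA LinearMap.id ∘ₗ (TensorProduct.comm k B k).toLinearMap
  ∧ τ ∘ₗ TensorProduct.map unitB LinearMap.id
      = TensorProduct.map LinearMap.id unitB ∘ₗ (TensorProduct.comm k k A).toLinearMap
  ∧ τ ∘ₗ TensorProduct.map mulB mulA
      = TensorProduct.map mulA mulB ∘ₗ midMap k τ ∘ₗ TensorProduct.map τ τ ∘ₗ midMap k τ

/-- The multiplication `(∇_A ⊗ ∇_B) ∘ (1 ⊗ τ ⊗ 1)` of the twisted tensor product. -/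
noncomputable def tMul (mulA : A ⊗[k] A →ₗ[k] A) (mulB : B ⊗[k] B →ₗ[k] B)
    (τ : B ⊗[k] A →ₗ[k] A ⊗[k] B) :
    (A ⊗[k] B) ⊗[k] (A ⊗[k] B) →ₗ[k] A ⊗[k] B :=
  TensorProduct.map mulA mulB ∘ₗ midMap k τ

/-- The unit `(η_A ⊗ η_B) ∘ (k ≅ k ⊗ k)` of the twisted tensor product. -/
noncomputable def tUnit (unitA : k →ₗ[k] A) (unitB : k →ₗ[k] B) : k →ₗ[k] A ⊗[k] B :=
  TensorProduct.map unitA unitB ∘ₗ (TensorProduct.lid k k).symm.toLinearMap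

/-- The comultiplication `(1 ⊗ τ⁻¹ ⊗ 1) ∘ (Δ_A ⊗ Δ_B)` of the twisted tensor product. -/
noncomputable def tComul (comulA : A →ₗ[k] A ⊗[k] A) (comulB : B →ₗ[k] B ⊗[k] B)
    (τinv : A ⊗[k] B →ₗ[k] B ⊗[k] A) :
    A ⊗[k] B →ₗ[k] (A ⊗[k] B) ⊗[k] (A ⊗[k] B) :=
  midMap k τinv ∘ₗ TensorProduct.map comulA comulB

/-- The counit `(k ⊗ k ≅ k) ∘ (ε_A ⊗ ε_B)` of the twisted tensor product. -/
noncomputable def tCounit (counitA : A →ₗ[k] k) (counitB : B →ₗ[k] k) :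
    A ⊗[k] B →ₗ[k] k :=
  (TensorProduct.lid k k).toLinearMap ∘ₗ TensorProduct.map counitA counitB

/-- Compatibility of `τ` with the counits (diagram (5) of the paper). -/
def CounitCompat (counitA : A →ₗ[k] k) (counitB : B →ₗ[k] k)
    (τ : B ⊗[k] A →ₗ[k] A ⊗[k] B) : Prop :=
  TensorProduct.map counitA LinearMap.id ∘ₗ τ
      = (TensorProduct.comm k B k).toLinearMap ∘ₗ TensorProduct.map LinearMap.id counitA
  ∧ TensorProduct.map LinearMap.id counitB ∘ₗ τ
      = (TensorProduct.comm k k A).toLinearMap ∘ₗ TensorProduct.map counitB LinearMap.id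

/-- Compatibility of `τ` with the comultiplications (diagram (6) of the paper):
`(Δ_A ⊗ Δ_B)∘τ = (1⊗τ⊗1)∘(τ⊗τ)∘(1⊗τ⊗1)∘(Δ_B ⊗ Δ_A)`. -/
def ComulCompat (comulA : A →ₗ[k] A ⊗[k] A) (comulB : B →ₗ[k] B ⊗[k] B)
    (τ : B ⊗[k] A →ₗ[k] A ⊗[k] B) : Prop :=
  TensorProduct.map comulA comulB ∘ₗ τ
      = midMap k τ ∘ₗ TensorProduct.map τ τ ∘ₗ midMap k τ ∘ₗ TensorProduct.map comulB comulA

/-- `(f ⊗ 1_B) ∘ τ = (1_A ⊗ τ) ∘ (τ ⊗ 1_A) ∘ (1_B ⊗ f)` for `f : A → A ⊗ A`. -/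
def MidACompat (f : A →ₗ[k] A ⊗[k] A) (τ : B ⊗[k] A →ₗ[k] A ⊗[k] B) : Prop :=
  TensorProduct.map f LinearMap.id ∘ₗ τ
    = (TensorProduct.assoc k A A B).symm.toLinearMap
      ∘ₗ TensorProduct.map LinearMap.id τ
      ∘ₗ (TensorProduct.assoc k A B A).toLinearMap
      ∘ₗ TensorProduct.map τ LinearMap.id
      ∘ₗ (TensorProduct.assoc k B A A).symm.toLinearMap
      ∘ₗ TensorProduct.map LinearMap.id f

/-- `(1_A ⊗ g) ∘ τ = (τ ⊗ 1_B) ∘ (1_B ⊗ τ) ∘ (g ⊗ 1_A)` for `g : B → B ⊗ B`. -/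
def MidBCompat (g : B →ₗ[k] B ⊗[k] B) (τ : B ⊗[k] A →ₗ[k] A ⊗[k] B) : Prop :=
  TensorProduct.map LinearMap.id g ∘ₗ τ
    = (TensorProduct.assoc k A B B).toLinearMap
      ∘ₗ TensorProduct.map τ LinearMap.id
      ∘ₗ (TensorProduct.assoc k B A B).symm.toLinearMap
      ∘ₗ TensorProduct.map LinearMap.id τ
      ∘ₗ (TensorProduct.assoc k B B A).toLinearMap
      ∘ₗ TensorProduct.map g LinearMap.id

/-- `(A, mul, unit, comul, counit)` is a Frobenius algebra (diagrammatically). -/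
def IsFrobenius (mul : A ⊗[k] A →ₗ[k] A) (unit : k →ₗ[k] A)
    (comul : A →ₗ[k] A ⊗[k] A) (counit : A →ₗ[k] k) : Prop :=
  IsUnitalAssoc k mul unit
  ∧ IsCounitalCoassoc k comul counit
  ∧ comul ∘ₗ mul
      = TensorProduct.map LinearMap.id mul ∘ₗ (TensorProduct.assoc k A A A).toLinearMap
          ∘ₗ TensorProduct.map comul LinearMap.id
  ∧ comul ∘ₗ mul
      = TensorProduct.map mul LinearMap.id ∘ₗ (TensorProduct.assoc k A A A).symm.toLinearMap
          ∘ₗ TensorProduct.map LinearMap.id comul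

/-- `(A, mul, unit, comul, counit)` is a bialgebra (diagrammatically). -/
def IsBialgebra (mul : A ⊗[k] A →ₗ[k] A) (unit : k →ₗ[k] A)
    (comul : A →ₗ[k] A ⊗[k] A) (counit : A →ₗ[k] k) : Prop :=
  IsUnitalAssoc k mul unit
  ∧ IsCounitalCoassoc k comul counit
  ∧ counit ∘ₗ mul = (TensorProduct.lid k k).toLinearMap ∘ₗ TensorProduct.map counit counit
  ∧ comul ∘ₗ unit = TensorProduct.map unit unit ∘ₗ (TensorProduct.lid k k).symm.toLinearMap
  ∧ counit ∘ₗ unit = LinearMap.id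
  ∧ comul ∘ₗ mul
      = TensorProduct.map mul mul ∘ₗ midMap k (TensorProduct.comm k A A).toLinearMap
          ∘ₗ TensorProduct.map comul comul

/-- `(A, mul, unit, comul, counit)` is a Hopf algebra: a bialgebra with an antipode. -/
def IsHopf (mul : A ⊗[k] A →ₗ[k] A) (unit : k →ₗ[k] A)
    (comul : A →ₗ[k] A ⊗[k] A) (counit : A →ₗ[k] k) : Prop :=
  IsBialgebra k mul unit comul counit
  ∧ ∃ S : A →ₗ[k] A,
      mul ∘ₗ TensorProduct.map S LinearMap.id ∘ₗ comul = unit ∘ₗ counit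
      ∧ mul ∘ₗ TensorProduct.map LinearMap.id S ∘ₗ comul = unit ∘ₗ counit

/-- `Γ` is a right inverse of the multiplication which is a bimodule morphism,
witnessing separability of the algebra. -/
def IsSeparableWith (mul : A ⊗[k] A →ₗ[k] A) (Γ : A →ₗ[k] A ⊗[k] A) : Prop :=
  mul ∘ₗ Γ = LinearMap.id
  ∧ Γ ∘ₗ mul ∘ₗ TensorProduct.map LinearMap.id mul
      = TensorProduct.map mul mul
          ∘ₗ (TensorProduct.assoc k A A (A ⊗[k] A)).symm.toLinearMap
          ∘ₗ TensorProduct.map LinearMap.id (TensorProduct.assoc k A A A).toLinearMap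
          ∘ₗ TensorProduct.map LinearMap.id (TensorProduct.map Γ LinearMap.id)

/-- The pairing `β` is associative: `β∘(1⊗∇) = β∘(∇⊗1)`. -/
def PairingAssoc (mul : A ⊗[k] A →ₗ[k] A) (β : A ⊗[k] A →ₗ[k] k) : Prop :=
  β ∘ₗ TensorProduct.map LinearMap.id mul ∘ₗ (TensorProduct.assoc k A A A).toLinearMap
    = β ∘ₗ TensorProduct.map mul LinearMap.id

/-- The pairing `β` is non-degenerate with co-pairing `α`:
`(1⊗β)∘(α⊗1) = 1_A` under the canonical isomorphisms. -/
def PairingNondeg (β : A ⊗[k] A →ₗ[k] k) (α : k →ₗ[k] A ⊗[k] A) : Prop :=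
  (TensorProduct.rid k A).toLinearMap
      ∘ₗ TensorProduct.map LinearMap.id β
      ∘ₗ (TensorProduct.assoc k A A A).toLinearMap
      ∘ₗ TensorProduct.map α LinearMap.id
      ∘ₗ (TensorProduct.lid k A).symm.toLinearMap = LinearMap.id

/-- The pairing `β` is symmetric: `β ∘ σ = β` for the flip `σ`. -/
def PairingSymm (β : A ⊗[k] A →ₗ[k] k) : Prop :=
  β ∘ₗ (TensorProduct.comm k A A).toLinearMap = β

end Defs

end TTP


section AuxTTP

open TensorProduct

variable {k : Type*} [Field k]

theorem TTP.midMap_tmul {X P Q Y R S : Type*}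
    [AddCommGroup X] [Module k X] [AddCommGroup P] [Module k P]
    [AddCommGroup Q] [Module k Q] [AddCommGroup Y] [Module k Y]
    [AddCommGroup R] [Module k R] [AddCommGroup S] [Module k S]
    (f : P ⊗[k] Q →ₗ[k] R ⊗[k] S) (x : X) (p : P) (q : Q) (y : Y) :
    TTP.midMap k f ((x ⊗ₜ p) ⊗ₜ (q ⊗ₜ y))
      = TensorProduct.assoc k (X ⊗[k] R) S Y
          ((TensorProduct.assoc k X R S).symm (x ⊗ₜ f (p ⊗ₜ q)) ⊗ₜ y) := by
  simp [TTP.midMap]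

end AuxTTP

set_option maxHeartbeats 2000000 in
open TTP in
/-- the twisted tensor product of unital associative algebras is a
unital associative algebra. -/
theorem twistedTensorProduct_isUnitalAssoc
    {k A B : Type*} [Field k]
    [AddCommGroup A] [Module k A] [AddCommGroup B] [Module k B]
    (mulA : A ⊗[k] A →ₗ[k] A) (unitA : k →ₗ[k] A)
    (mulB : B ⊗[k] B →ₗ[k] B) (unitB : k →ₗ[k] B)
    (hA : IsUnitalAssoc k mulA unitA) (hB : IsUnitalAssoc k mulB unitB)
    (τ : B ⊗[k] A ≃ₗ[k] A ⊗[k] B)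
    (hτ : IsTwisting k mulA unitA mulB unitB τ.toLinearMap) :
    IsUnitalAssoc k (tMul k mulA mulB τ.toLinearMap) (tUnit k unitA unitB) := by
    classical
  obtain ⟨hA1, hA2, hA3⟩ := hA
  obtain ⟨hB1, hB2, hB3⟩ := hB
  obtain ⟨ht1, ht2, ht3⟩ := hτ
  have pA1 : ∀ a : A, mulA (unitA 1 ⊗ₜ a) = a := fun a => by
    simpa using LinearMap.congr_fun hA1 a
  have pA2 : ∀ a : A, mulA (a ⊗ₜ unitA 1) = a := fun a => by
    simpa using LinearMap.congr_fun hA2 a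
  have pA3 : ∀ x y z : A, mulA (mulA (x ⊗ₜ y) ⊗ₜ z) = mulA (x ⊗ₜ mulA (y ⊗ₜ z)) :=
    fun x y z => by simpa using LinearMap.congr_fun hA3 ((x ⊗ₜ y) ⊗ₜ z)
  have pB1 : ∀ b : B, mulB (unitB 1 ⊗ₜ b) = b := fun b => by
    simpa using LinearMap.congr_fun hB1 b
  have pB2 : ∀ b : B, mulB (b ⊗ₜ unitB 1) = b := fun b => by
    simpa using LinearMap.congr_fun hB2 b
  have pB3 : ∀ x y z : B, mulB (mulB (x ⊗ₜ y) ⊗ₜ z) = mulB (x ⊗ₜ mulB (y ⊗ₜ z)) :=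
    fun x y z => by simpa using LinearMap.congr_fun hB3 ((x ⊗ₜ y) ⊗ₜ z)
  have tu1 : ∀ b : B, τ (b ⊗ₜ unitA 1) = unitA 1 ⊗ₜ b := fun b => by
    simpa using LinearMap.congr_fun ht1 (b ⊗ₜ (1 : k))
  have tu2 : ∀ a : A, τ (unitB 1 ⊗ₜ a) = a ⊗ₜ unitB 1 := fun a => by
    simpa using LinearMap.congr_fun ht2 ((1 : k) ⊗ₜ a)
  have phex : ∀ (b b' : B) (a a' : A),
      τ (mulB (b ⊗ₜ b') ⊗ₜ mulA (a ⊗ₜ a'))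
        = TensorProduct.map mulA mulB (TTP.midMap k τ.toLinearMap
            (TensorProduct.map τ.toLinearMap τ.toLinearMap
              (TTP.midMap k τ.toLinearMap ((b ⊗ₜ b') ⊗ₜ (a ⊗ₜ a'))))) := by
    intro b b' a a'
    simpa using LinearMap.congr_fun ht3 ((b ⊗ₜ b') ⊗ₜ (a ⊗ₜ a'))
  have L1 : ∀ (b b' : B) (a : A),
      τ (mulB (b ⊗ₜ b') ⊗ₜ a)
        = LinearMap.lTensor A mulB (TensorProduct.assoc k A B B
            (LinearMap.rTensor B (τ : B ⊗[k] A →ₗ[k] A ⊗[k] B)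
              ((TensorProduct.assoc k B A B).symm (b ⊗ₜ τ (b' ⊗ₜ a))))) := by
    intro b b' a
    have h0 := phex b b' a (unitA 1)
    rw [pA2] at h0
    rw [h0, TTP.midMap_tmul]
    simp only [LinearEquiv.coe_coe]
    generalize τ (b' ⊗ₜ a) = u
    induction u using TensorProduct.induction_on with
    | zero => simp
    | tmul u1 u2 =>
      simp only [TensorProduct.assoc_symm_tmul, TensorProduct.assoc_tmul,
        TensorProduct.map_tmul, LinearEquiv.coe_coe, tu1,
        LinearMap.rTensor_tmul, LinearMap.lTensor_tmul]
      generalize τ (b ⊗ₜ u1) = v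
      induction v using TensorProduct.induction_on with
      | zero => simp
      | tmul v1 v2 =>
        simp [TTP.midMap_tmul, tu1, pA2]
      | add v v' hv hv' =>
        simp only [TensorProduct.add_tmul, TensorProduct.tmul_add, map_add, hv, hv']
    | add u u' hu hu' =>
      simp only [TensorProduct.add_tmul, TensorProduct.tmul_add, map_add, hu, hu']
  have L2 : ∀ (a a' : A) (b : B),
      τ (b ⊗ₜ mulA (a ⊗ₜ a'))
        = LinearMap.rTensor B mulA ((TensorProduct.assoc k A A B).symm
            (LinearMap.lTensor A (τ : B ⊗[k] A →ₗ[k] A ⊗[k] B)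
              (TensorProduct.assoc k A B A (τ (b ⊗ₜ a) ⊗ₜ a')))) := by
    intro a a' b
    have h0 := phex b (unitB 1) a a'
    rw [pB2] at h0
    rw [h0, TTP.midMap_tmul]
    simp only [LinearEquiv.coe_coe, tu2, TensorProduct.assoc_symm_tmul,
      TensorProduct.assoc_tmul, TensorProduct.map_tmul]
    generalize τ (b ⊗ₜ a) = t
    induction t using TensorProduct.induction_on with
    | zero => simp
    | tmul t1 t2 =>
      simp only [TensorProduct.assoc_tmul, LinearMap.lTensor_tmul, LinearEquiv.coe_coe,
        TTP.midMap_tmul, tu2]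
      generalize τ (t2 ⊗ₜ a') = s
      induction s using TensorProduct.induction_on with
      | zero => simp
      | tmul s1 s2 =>
        simp [pB2]
      | add s s' hs hs' =>
        simp only [TensorProduct.add_tmul, TensorProduct.tmul_add, map_add, hs, hs']
    | add t t' ht ht' =>
      simp only [TensorProduct.add_tmul, TensorProduct.tmul_add, map_add, ht, ht']
  refine ⟨?_, ?_, ?_⟩
  · apply TensorProduct.ext'
    intro a b
    simp [TTP.tMul, TTP.tUnit, TTP.midMap_tmul, tu2, pA1, pB1]
  · apply TensorProduct.ext'
    intro a b
    simp [TTP.tMul, TTP.tUnit, TTP.midMap_tmul, tu1, pA2, pB2]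
  · have key : ∀ (a1 a2 a3 : A) (b1 b2 b3 : B),
        TTP.tMul k mulA mulB τ.toLinearMap
            (TTP.tMul k mulA mulB τ.toLinearMap ((a1 ⊗ₜ b1) ⊗ₜ (a2 ⊗ₜ b2)) ⊗ₜ (a3 ⊗ₜ b3))
          = TTP.tMul k mulA mulB τ.toLinearMap
            ((a1 ⊗ₜ b1) ⊗ₜ TTP.tMul k mulA mulB τ.toLinearMap ((a2 ⊗ₜ b2) ⊗ₜ (a3 ⊗ₜ b3))) := by
      intro a1 a2 a3 b1 b2 b3
      have lhs_eq : TTP.tMul k mulA mulB τ.toLinearMap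
            (TTP.tMul k mulA mulB τ.toLinearMap ((a1 ⊗ₜ b1) ⊗ₜ (a2 ⊗ₜ b2)) ⊗ₜ (a3 ⊗ₜ b3))
          = TensorProduct.map (mulA ∘ₗ LinearMap.rTensor A (mulA ∘ₗ TensorProduct.mk k A A a1))
              (mulB ∘ₗ ((TensorProduct.mk k B B).flip b3) ∘ₗ mulB)
              (TTP.midMap k τ.toLinearMap (τ (b1 ⊗ₜ a2) ⊗ₜ τ (b2 ⊗ₜ a3))) := by
        simp only [TTP.tMul, LinearMap.coe_comp, Function.comp_apply, TTP.midMap_tmul,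
          LinearEquiv.coe_coe]
        generalize τ (b1 ⊗ₜ a2) = t
        induction t using TensorProduct.induction_on with
        | zero => simp
        | tmul t1 t2 =>
          simp only [TensorProduct.assoc_symm_tmul, TensorProduct.assoc_tmul,
            TensorProduct.map_tmul, TTP.midMap_tmul, LinearEquiv.coe_coe, L1]
          generalize τ (b2 ⊗ₜ a3) = u
          induction u using TensorProduct.induction_on with
          | zero => simp
          | tmul u1 u2 =>
            simp only [TensorProduct.assoc_symm_tmul, TensorProduct.assoc_tmul,
              LinearMap.rTensor_tmul, LinearMap.lTensor_tmul, LinearEquiv.coe_coe,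
              TTP.midMap_tmul, TensorProduct.map_tmul]
            generalize τ (t2 ⊗ₜ u1) = p
            induction p using TensorProduct.induction_on with
            | zero => simp
            | tmul p1 p2 =>
              simp [TensorProduct.mk_apply, LinearMap.flip_apply]
            | add p p' hp hp' =>
              simp only [TensorProduct.add_tmul, TensorProduct.tmul_add, map_add, hp, hp']
          | add u u' hu hu' =>
            simp only [TensorProduct.add_tmul, TensorProduct.tmul_add, map_add, hu, hu']
        | add t t' ht ht' =>
          simp only [TensorProduct.add_tmul, TensorProduct.tmul_add, map_add, ht, ht']
      have rhs_eq : TTP.tMul k mulA mulB τ.toLinearMap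
            ((a1 ⊗ₜ b1) ⊗ₜ TTP.tMul k mulA mulB τ.toLinearMap ((a2 ⊗ₜ b2) ⊗ₜ (a3 ⊗ₜ b3)))
          = TensorProduct.map (mulA ∘ₗ LinearMap.rTensor A (mulA ∘ₗ TensorProduct.mk k A A a1))
              (mulB ∘ₗ ((TensorProduct.mk k B B).flip b3) ∘ₗ mulB)
              (TTP.midMap k τ.toLinearMap (τ (b1 ⊗ₜ a2) ⊗ₜ τ (b2 ⊗ₜ a3))) := by
        simp only [TTP.tMul, LinearMap.coe_comp, Function.comp_apply, TTP.midMap_tmul,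
          LinearEquiv.coe_coe]
        generalize τ (b2 ⊗ₜ a3) = u
        induction u using TensorProduct.induction_on with
        | zero => simp
        | tmul u1 u2 =>
          simp only [TensorProduct.assoc_symm_tmul, TensorProduct.assoc_tmul,
            TensorProduct.map_tmul, TTP.midMap_tmul, LinearEquiv.coe_coe, L2]
          generalize τ (b1 ⊗ₜ a2) = t
          induction t using TensorProduct.induction_on with
          | zero => simp
          | tmul t1 t2 =>
            simp only [TensorProduct.assoc_symm_tmul, TensorProduct.assoc_tmul,
              LinearMap.rTensor_tmul, LinearMap.lTensor_tmul, LinearEquiv.coe_coe,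
              TTP.midMap_tmul, TensorProduct.map_tmul]
            generalize τ (t2 ⊗ₜ u1) = p
            induction p using TensorProduct.induction_on with
            | zero => simp
            | tmul p1 p2 =>
              simp only [TensorProduct.assoc_symm_tmul, TensorProduct.assoc_tmul,
                LinearMap.rTensor_tmul, TensorProduct.map_tmul, LinearMap.coe_comp,
                Function.comp_apply, TensorProduct.mk_apply, LinearMap.flip_apply,
                LinearMap.lTensor_tmul]
              rw [pA3, pB3]
            | add p p' hp hp' =>
              simp only [TensorProduct.add_tmul, TensorProduct.tmul_add, map_add, hp, hp']
          | add t t' ht ht' =>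
            simp only [TensorProduct.add_tmul, TensorProduct.tmul_add, map_add, ht, ht']
        | add u u' hu hu' =>
          simp only [TensorProduct.add_tmul, TensorProduct.tmul_add, map_add, hu, hu']
      rw [lhs_eq, rhs_eq]
    apply TensorProduct.ext'
    intro xy z
    induction xy using TensorProduct.induction_on with
    | zero => simp
    | tmul x y =>
      induction x using TensorProduct.induction_on with
      | zero => simp
      | tmul a1 b1 =>
        induction y using TensorProduct.induction_on with
        | zero => simp
        | tmul a2 b2 =>
          induction z using TensorProduct.induction_on with
          | zero => simp
          | tmul a3 b3 =>
            simpa using key a1 a2 a3 b1 b2 b3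
          | add z z' hz hz' =>
            simp only [TensorProduct.tmul_add, TensorProduct.add_tmul, map_add, hz, hz']
        | add y y' hy hy' =>
          simp only [TensorProduct.tmul_add, TensorProduct.add_tmul, map_add, hy, hy']
      | add x x' hx hx' =>
        simp only [TensorProduct.tmul_add, TensorProduct.add_tmul, map_add, hx, hx']
    | add w w' hw hw' =>
      simp only [TensorProduct.tmul_add, TensorProduct.add_tmul, map_add, hw, hw']
end

section
/- Let A and B be unital associative k-algebras and let τ : B⊗A → A⊗B be a bijective k-linear map. Then the vector space A⊗B equipped with multiplication (∇_A⊗∇_B)∘(1_A⊗τ⊗1_B) and unit (η_A⊗η_B)∘(k ≅ k⊗k) is a unital associative k-algebra if and only if τ is a twisting map. -/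
open scoped TensorProduct

namespace TTP

open TensorProduct

section AuxGen

variable {k : Type*} [Field k]
variable {X P Q Y R S : Type*}
  [AddCommGroup X] [Module k X] [AddCommGroup P] [Module k P]
  [AddCommGroup Q] [Module k Q] [AddCommGroup Y] [Module k Y]
  [AddCommGroup R] [Module k R] [AddCommGroup S] [Module k S]

lemma map_map_apply {X' Y' : Type*} [AddCommGroup X'] [Module k X']
    [AddCommGroup Y'] [Module k Y']
    (f : X →ₗ[k] R) (g : Y →ₗ[k] S) (f' : X' →ₗ[k] X) (g' : Y' →ₗ[k] Y) (t : X' ⊗[k] Y') :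
    map f g (map f' g' t) = map (f ∘ₗ f') (g ∘ₗ g') t := by
  rw [map_comp]; rfl

lemma assoc_symm_mid (x : X) (t : R ⊗[k] S) :
    (TensorProduct.assoc k X R S).symm (x ⊗ₜ t) = map (mk k X R x) LinearMap.id t := by
  induction t using TensorProduct.induction_on with
  | zero => simp [tmul_zero]
  | tmul r s => simp
  | add u v hu hv => simp [tmul_add, hu, hv]

lemma assoc_mid (y : Y) (t : X ⊗[k] S) :
    (TensorProduct.assoc k X S Y) (t ⊗ₜ y) = map LinearMap.id ((mk k S Y).flip y) t := by
  induction t using TensorProduct.induction_on with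
  | zero => simp [zero_tmul]
  | tmul r s => simp
  | add u v hu hv => simp [add_tmul, hu, hv]

lemma midMap_tmul_s2 (f : P ⊗[k] Q →ₗ[k] R ⊗[k] S) (x : X) (p : P) (q : Q) (y : Y) :
    midMap k f ((x ⊗ₜ p) ⊗ₜ (q ⊗ₜ y))
      = map (mk k X R x) ((mk k S Y).flip y) (f (p ⊗ₜ q)) := by
  simp only [midMap, LinearMap.comp_apply, LinearEquiv.coe_coe, assoc_symm_tmul, map_tmul,
    assoc_tmul, LinearMap.id_apply]
  rw [assoc_symm_mid, assoc_mid, map_map_apply, LinearMap.id_comp, LinearMap.comp_id]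

end AuxGen

section AuxMain

variable {k A B : Type*} [Field k]
  [AddCommGroup A] [Module k A] [AddCommGroup B] [Module k B]
  (mulA : A ⊗[k] A →ₗ[k] A) (unitA : k →ₗ[k] A)
  (mulB : B ⊗[k] B →ₗ[k] B) (unitB : k →ₗ[k] B)
  (τL : B ⊗[k] A →ₗ[k] A ⊗[k] B)

lemma tMul_tmul (a : A) (b : B) (a' : A) (b' : B) :
    tMul k mulA mulB τL ((a ⊗ₜ b) ⊗ₜ (a' ⊗ₜ b'))
      = map (mulA ∘ₗ mk k A A a) (mulB ∘ₗ (mk k B B).flip b') (τL (b ⊗ₜ a')) := by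
  simp only [tMul, LinearMap.comp_apply, midMap_tmul_s2, map_map_apply]

-- unital facts
lemma Lone (hA : IsUnitalAssoc k mulA unitA) :
    mulA ∘ₗ mk k A A (unitA 1) = LinearMap.id := by
  ext a
  simpa using LinearMap.congr_fun hA.1 a

lemma Rone (hA : IsUnitalAssoc k mulA unitA) :
    mulA ∘ₗ (mk k A A).flip (unitA 1) = LinearMap.id := by
  ext a
  simpa using LinearMap.congr_fun hA.2.1 a

lemma Lcomp (hA : IsUnitalAssoc k mulA unitA) (a u : A) :
    (mulA ∘ₗ mk k A A a) ∘ₗ (mulA ∘ₗ mk k A A u) = mulA ∘ₗ mk k A A (mulA (a ⊗ₜ u)) := by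
  ext w
  simpa using (LinearMap.congr_fun hA.2.2 ((a ⊗ₜ u) ⊗ₜ w)).symm

lemma Rcomp (hB : IsUnitalAssoc k mulB unitB) (y b : B) :
    (mulB ∘ₗ (mk k B B).flip b) ∘ₗ (mulB ∘ₗ (mk k B B).flip y)
      = mulB ∘ₗ (mk k B B).flip (mulB (y ⊗ₜ b)) := by
  ext w
  simpa using LinearMap.congr_fun hB.2.2 ((w ⊗ₜ y) ⊗ₜ b)

end AuxMain

section AuxCore

variable {k A B : Type*} [Field k]
  [AddCommGroup A] [Module k A] [AddCommGroup B] [Module k B]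
  {mulA : A ⊗[k] A →ₗ[k] A} {unitA : k →ₗ[k] A}
  {mulB : B ⊗[k] B →ₗ[k] B} {unitB : k →ₗ[k] B}
  {τL : B ⊗[k] A →ₗ[k] A ⊗[k] B}

/-- `tMul ((u⊗v) ⊗ S)` expressed functorially in `S`. -/
lemma P1 (u : A) (v : B) (S : A ⊗[k] B) :
    tMul k mulA mulB τL ((u ⊗ₜ v) ⊗ₜ S)
      = map (mulA ∘ₗ mk k A A u) LinearMap.id
          ((map LinearMap.id mulB ∘ₗ (TensorProduct.assoc k A B B).toLinearMap
            ∘ₗ map (τL ∘ₗ mk k B A v) LinearMap.id) S) := by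
  induction S using TensorProduct.induction_on with
  | zero => simp [tmul_zero]
  | add s t hs ht => simp only [tmul_add, map_add, hs, ht]
  | tmul x y =>
      simp only [tMul_tmul, LinearMap.comp_apply, map_tmul, LinearMap.id_apply, mk_apply,
        LinearEquiv.coe_coe, assoc_mid, map_map_apply, LinearMap.id_comp, LinearMap.comp_id]

/-- `tMul (T ⊗ (x⊗y))` expressed functorially in `T`. -/
lemma P2 (x : A) (y : B) (T : A ⊗[k] B) :
    tMul k mulA mulB τL (T ⊗ₜ (x ⊗ₜ y))
      = map LinearMap.id (mulB ∘ₗ (mk k B B).flip y)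
          ((map mulA LinearMap.id ∘ₗ (TensorProduct.assoc k A A B).symm.toLinearMap
            ∘ₗ map LinearMap.id (τL ∘ₗ (mk k B A).flip x)) T) := by
  induction T using TensorProduct.induction_on with
  | zero => simp [zero_tmul]
  | add s t hs ht => simp only [add_tmul, map_add, hs, ht]
  | tmul u v =>
      simp only [tMul_tmul, LinearMap.comp_apply, map_tmul, LinearMap.id_apply, mk_apply,
        LinearEquiv.coe_coe, assoc_symm_mid, map_map_apply, LinearMap.id_comp, LinearMap.comp_id,
        LinearMap.flip_apply]

lemma tau_oneA (h : τL ∘ₗ map LinearMap.id unitA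
      = map unitA LinearMap.id ∘ₗ (TensorProduct.comm k B k).toLinearMap) (b : B) :
    τL (b ⊗ₜ unitA 1) = unitA 1 ⊗ₜ b := by
  simpa using LinearMap.congr_fun h (b ⊗ₜ (1 : k))

lemma tau_oneB (h : τL ∘ₗ map unitB LinearMap.id
      = map LinearMap.id unitB ∘ₗ (TensorProduct.comm k k A).toLinearMap) (a : A) :
    τL (unitB 1 ⊗ₜ a) = a ⊗ₜ unitB 1 := by
  simpa using LinearMap.congr_fun h ((1 : k) ⊗ₜ a)

lemma J1 (hA : IsUnitalAssoc k mulA unitA)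
    (hu : ∀ b : B, τL (b ⊗ₜ unitA 1) = unitA 1 ⊗ₜ b)
    (T : A ⊗[k] B) (y : B) :
    map mulA mulB (midMap k τL (T ⊗ₜ ((unitA 1) ⊗ₜ y)))
      = map LinearMap.id mulB ((TensorProduct.assoc k A B B) (T ⊗ₜ y)) := by
  induction T using TensorProduct.induction_on with
  | zero => simp [zero_tmul]
  | add s t hs ht => simp only [add_tmul, map_add, hs, ht]
  | tmul c d =>
      have h1 : mulA (c ⊗ₜ unitA 1) = c := by
        simpa using LinearMap.congr_fun hA.2.1 c
      simp [midMap_tmul_s2, hu d, map_map_apply, h1]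

lemma J2 (hB : IsUnitalAssoc k mulB unitB)
    (hu : ∀ a : A, τL (unitB 1 ⊗ₜ a) = a ⊗ₜ unitB 1)
    (W : A ⊗[k] B) (x : A) :
    map mulA mulB (midMap k τL (W ⊗ₜ (x ⊗ₜ unitB 1)))
      = map mulA LinearMap.id ((TensorProduct.assoc k A A B).symm
          (map LinearMap.id (τL ∘ₗ (mk k B A).flip x) W)) := by
  induction W using TensorProduct.induction_on with
  | zero => simp [zero_tmul]
  | add s t hs ht => simp only [add_tmul, map_add, hs, ht]
  | tmul u v =>
      have h1 : mulB ∘ₗ (mk k B B).flip (unitB 1) = LinearMap.id := Rone mulB unitB hB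
      simp only [midMap_tmul_s2, map_tmul, LinearMap.comp_apply, LinearMap.id_apply,
        LinearMap.flip_apply, mk_apply, LinearEquiv.coe_coe, assoc_symm_mid,
        map_map_apply, h1, LinearMap.id_comp, LinearMap.comp_id]

lemma K1 (hA : IsUnitalAssoc k mulA unitA)
    (hu : ∀ b : B, τL (b ⊗ₜ unitA 1) = unitA 1 ⊗ₜ b)
    (hm : τL ∘ₗ map mulB mulA
      = map mulA mulB ∘ₗ midMap k τL ∘ₗ map τL τL ∘ₗ midMap k τL)
    (v : B) (b' : B) (a'' : A) :
    τL (mulB (v ⊗ₜ b') ⊗ₜ a'')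
      = (map LinearMap.id mulB ∘ₗ (TensorProduct.assoc k A B B).toLinearMap
          ∘ₗ map (τL ∘ₗ mk k B A v) LinearMap.id) (τL (b' ⊗ₜ a'')) := by
  have h1 : mulA (a'' ⊗ₜ unitA 1) = a'' := by
    simpa using LinearMap.congr_fun hA.2.1 a''
  have h2 := LinearMap.congr_fun hm ((v ⊗ₜ b') ⊗ₜ (a'' ⊗ₜ unitA 1))
  simp only [LinearMap.comp_apply, map_tmul, h1, midMap_tmul_s2] at h2
  rw [h2]
  generalize τL (b' ⊗ₜ a'') = S
  induction S using TensorProduct.induction_on with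
  | zero => simp
  | add s t hs ht => simp only [map_add, hs, ht]
  | tmul x y =>
      simp only [map_tmul, LinearMap.comp_apply, LinearMap.flip_apply, mk_apply,
        LinearMap.id_apply, hu y, LinearEquiv.coe_coe]
      rw [J1 hA hu (τL (v ⊗ₜ x)) y, assoc_mid]

lemma K2 (hB : IsUnitalAssoc k mulB unitB)
    (hu : ∀ a : A, τL (unitB 1 ⊗ₜ a) = a ⊗ₜ unitB 1)
    (hm : τL ∘ₗ map mulB mulA
      = map mulA mulB ∘ₗ midMap k τL ∘ₗ map τL τL ∘ₗ midMap k τL)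
    (b : B) (a' : A) (p : A) :
    τL (b ⊗ₜ mulA (a' ⊗ₜ p))
      = (map mulA LinearMap.id ∘ₗ (TensorProduct.assoc k A A B).symm.toLinearMap
          ∘ₗ map LinearMap.id (τL ∘ₗ (mk k B A).flip p)) (τL (b ⊗ₜ a')) := by
  have h1 : mulB (b ⊗ₜ unitB 1) = b := by
    simpa using LinearMap.congr_fun hB.2.1 b
  have h2 := LinearMap.congr_fun hm ((b ⊗ₜ unitB 1) ⊗ₜ (a' ⊗ₜ p))
  simp only [LinearMap.comp_apply, map_tmul, h1, midMap_tmul_s2, hu a', mk_apply,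
    LinearMap.flip_apply, hu p] at h2
  rw [h2, J2 hB hu (τL (b ⊗ₜ a')) p]
  simp only [LinearMap.comp_apply, LinearEquiv.coe_coe]

lemma StepA (hA : IsUnitalAssoc k mulA unitA) (hB : IsUnitalAssoc k mulB unitB)
    (hu : ∀ b : B, τL (b ⊗ₜ unitA 1) = unitA 1 ⊗ₜ b)
    (hm : τL ∘ₗ map mulB mulA
      = map mulA mulB ∘ₗ midMap k τL ∘ₗ map τL τL ∘ₗ midMap k τL)
    (a : A) (b' : B) (a'' : A) (b'' : B) (T : A ⊗[k] B) :
    tMul k mulA mulB τL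
        ((map (mulA ∘ₗ mk k A A a) (mulB ∘ₗ (mk k B B).flip b') T) ⊗ₜ (a'' ⊗ₜ b''))
      = map (mulA ∘ₗ mk k A A a) (mulB ∘ₗ (mk k B B).flip b'')
          (tMul k mulA mulB τL (T ⊗ₜ τL (b' ⊗ₜ a''))) := by
  induction T using TensorProduct.induction_on with
  | zero => simp [zero_tmul]
  | add s t hs ht => simp only [map_add, add_tmul, hs, ht]
  | tmul u v =>
      simp only [map_tmul, LinearMap.comp_apply, LinearMap.flip_apply, mk_apply]
      rw [tMul_tmul, K1 hA hu hm v b' a'', P1 u v, map_map_apply, LinearMap.comp_id,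
        Lcomp mulA unitA hA a u]

lemma StepB (hA : IsUnitalAssoc k mulA unitA) (hB : IsUnitalAssoc k mulB unitB)
    (hu : ∀ a : A, τL (unitB 1 ⊗ₜ a) = a ⊗ₜ unitB 1)
    (hm : τL ∘ₗ map mulB mulA
      = map mulA mulB ∘ₗ midMap k τL ∘ₗ map τL τL ∘ₗ midMap k τL)
    (a : A) (b : B) (a' : A) (b'' : B) (S : A ⊗[k] B) :
    tMul k mulA mulB τL
        ((a ⊗ₜ b) ⊗ₜ (map (mulA ∘ₗ mk k A A a') (mulB ∘ₗ (mk k B B).flip b'') S))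
      = map (mulA ∘ₗ mk k A A a) (mulB ∘ₗ (mk k B B).flip b'')
          (tMul k mulA mulB τL (τL (b ⊗ₜ a') ⊗ₜ S)) := by
  induction S using TensorProduct.induction_on with
  | zero => simp [tmul_zero]
  | add s t hs ht => simp only [map_add, tmul_add, hs, ht]
  | tmul x y =>
      simp only [map_tmul, LinearMap.comp_apply, LinearMap.flip_apply, mk_apply]
      rw [tMul_tmul, K2 hB hu hm b a' x, P2 x y, map_map_apply, LinearMap.comp_id,
        Rcomp mulB unitB hB y b'']

lemma c1fwd (hA : IsUnitalAssoc k mulA unitA) (hB : IsUnitalAssoc k mulB unitB)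
    (b : B) (a : A) :
    τL (b ⊗ₜ a) = tMul k mulA mulB τL ((unitA 1 ⊗ₜ b) ⊗ₜ (a ⊗ₜ unitB 1)) := by
  rw [tMul_tmul, Lone mulA unitA hA, Rone mulB unitB hB, map_id, LinearMap.id_apply]

lemma c2fwd (hA : IsUnitalAssoc k mulA unitA)
    (e1 : ∀ b : B, τL (b ⊗ₜ unitA 1) = unitA 1 ⊗ₜ b) (b b' : B) :
    tMul k mulA mulB τL ((unitA 1 ⊗ₜ b) ⊗ₜ (unitA 1 ⊗ₜ b'))
      = unitA 1 ⊗ₜ mulB (b ⊗ₜ b') := by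
  have h1 : mulA (unitA 1 ⊗ₜ unitA 1) = unitA 1 := by
    simpa using LinearMap.congr_fun hA.1 (unitA 1)
  rw [tMul_tmul, e1 b]
  simp [h1]

lemma c3fwd (hB : IsUnitalAssoc k mulB unitB)
    (e2 : ∀ a : A, τL (unitB 1 ⊗ₜ a) = a ⊗ₜ unitB 1) (a a' : A) :
    tMul k mulA mulB τL ((a ⊗ₜ unitB 1) ⊗ₜ (a' ⊗ₜ unitB 1))
      = mulA (a ⊗ₜ a') ⊗ₜ unitB 1 := by
  have h1 : mulB (unitB 1 ⊗ₜ unitB 1) = unitB 1 := by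
    simpa using LinearMap.congr_fun hB.1 (unitB 1)
  rw [tMul_tmul, e2 a']
  simp [h1]

lemma Q1fwd (hB : IsUnitalAssoc k mulB unitB)
    (e2 : ∀ a : A, τL (unitB 1 ⊗ₜ a) = a ⊗ₜ unitB 1) (x : A) (V : A ⊗[k] B) :
    tMul k mulA mulB τL ((x ⊗ₜ unitB 1) ⊗ₜ V)
      = map (mulA ∘ₗ mk k A A x) LinearMap.id V := by
  induction V using TensorProduct.induction_on with
  | zero => simp [tmul_zero]
  | add s t hs ht => simp only [tmul_add, map_add, hs, ht]
  | tmul e f =>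
      have h1 : mulB (unitB 1 ⊗ₜ f) = f := by
        simpa using LinearMap.congr_fun hB.1 f
      rw [tMul_tmul, e2 e]
      simp [h1]

lemma MainAux (hA : IsUnitalAssoc k mulA unitA) (hB : IsUnitalAssoc k mulB unitB)
    (e2 : ∀ a : A, τL (unitB 1 ⊗ₜ a) = a ⊗ₜ unitB 1)
    (assocE : ∀ z w t : A ⊗[k] B,
      tMul k mulA mulB τL (tMul k mulA mulB τL (z ⊗ₜ w) ⊗ₜ t)
        = tMul k mulA mulB τL (z ⊗ₜ tMul k mulA mulB τL (w ⊗ₜ t)))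
    (b : B) (a' : A) (Z : A ⊗[k] B) :
    map mulA mulB (midMap k τL (map τL τL (map (mk k B A b) ((mk k B A).flip a') Z)))
      = tMul k mulA mulB τL
          ((unitA 1 ⊗ₜ b) ⊗ₜ tMul k mulA mulB τL (Z ⊗ₜ (a' ⊗ₜ unitB 1))) := by
  induction Z using TensorProduct.induction_on with
  | zero => simp [tmul_zero]
  | add s t hs ht => simp only [add_tmul, map_add, tmul_add, hs, ht]
  | tmul x y =>
      have hR : tMul k mulA mulB τL ((x ⊗ₜ y) ⊗ₜ (a' ⊗ₜ unitB 1))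
          = map (mulA ∘ₗ mk k A A x) LinearMap.id (τL (y ⊗ₜ a')) := by
        rw [tMul_tmul, Rone mulB unitB hB]
      rw [hR, ← Q1fwd hB e2 x (τL (y ⊗ₜ a')), ← assocE, ← c1fwd hA hB b x]
      simp only [map_tmul, LinearMap.flip_apply, mk_apply]
      rfl

end AuxCore

end TTP


open TTP in
/-- for a bijective linear map `τ : B ⊗ A → A ⊗ B`, the vector space
`A ⊗ B` with the twisted multiplication and unit is a unital associative algebra
if and only if `τ` is a twisting map. -/
theorem twistedTensorProduct_isUnitalAssoc_iff_isTwisting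
    {k A B : Type*} [Field k]
    [AddCommGroup A] [Module k A] [AddCommGroup B] [Module k B]
    (mulA : A ⊗[k] A →ₗ[k] A) (unitA : k →ₗ[k] A)
    (mulB : B ⊗[k] B →ₗ[k] B) (unitB : k →ₗ[k] B)
    (hA : IsUnitalAssoc k mulA unitA) (hB : IsUnitalAssoc k mulB unitB)
    (τ : B ⊗[k] A ≃ₗ[k] A ⊗[k] B) :
    IsUnitalAssoc k (tMul k mulA mulB τ.toLinearMap) (tUnit k unitA unitB)
      ↔ IsTwisting k mulA unitA mulB unitB τ.toLinearMap := by
  open TensorProduct in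
  constructor
  · -- unital associative ⇒ twisting
    intro H
    have hu1 : tUnit k unitA unitB 1 = unitA 1 ⊗ₜ unitB 1 := by
      simp [tUnit]
    -- τ (b ⊗ 1A) = 1A ⊗ b
    have e1 : ∀ b : B, τ.toLinearMap (b ⊗ₜ unitA 1) = unitA 1 ⊗ₜ b := by
      intro b
      have h := LinearMap.congr_fun H.2.1 ((unitA 1) ⊗ₜ b)
      simp only [LinearMap.comp_apply, LinearEquiv.coe_coe, TensorProduct.rid_symm_apply,
        map_tmul, LinearMap.id_apply, hu1] at h
      rw [tMul_tmul, Lone mulA unitA hA, Rone mulB unitB hB, map_id, LinearMap.id_apply] at h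
      exact h
    -- τ (1B ⊗ a) = a ⊗ 1B
    have e2 : ∀ a : A, τ.toLinearMap (unitB 1 ⊗ₜ a) = a ⊗ₜ unitB 1 := by
      intro a
      have h := LinearMap.congr_fun H.1 (a ⊗ₜ unitB 1)
      simp only [LinearMap.comp_apply, LinearEquiv.coe_coe, TensorProduct.lid_symm_apply,
        map_tmul, LinearMap.id_apply, hu1] at h
      rw [tMul_tmul, Lone mulA unitA hA, Rone mulB unitB hB, map_id, LinearMap.id_apply] at h
      exact h
    have assocE : ∀ z w t : A ⊗[k] B,
        tMul k mulA mulB τ.toLinearMap (tMul k mulA mulB τ.toLinearMap (z ⊗ₜ w) ⊗ₜ t)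
          = tMul k mulA mulB τ.toLinearMap
              (z ⊗ₜ tMul k mulA mulB τ.toLinearMap (w ⊗ₜ t)) := by
      intro z w t
      have h := LinearMap.congr_fun H.2.2 ((z ⊗ₜ w) ⊗ₜ t)
      simpa using h
    refine ⟨?_, ?_, ?_⟩
    · apply TensorProduct.ext'
      intro b r
      have hr : unitA r = r • unitA 1 := by rw [← map_smul, smul_eq_mul, mul_one]
      simp only [LinearMap.comp_apply, map_tmul, LinearMap.id_apply, LinearEquiv.coe_coe,
        TensorProduct.comm_tmul, hr]
      rw [tmul_smul, map_smul]
      rw [show τ (b ⊗ₜ[k] unitA 1) = unitA 1 ⊗ₜ[k] b from e1 b, smul_tmul']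
    · apply TensorProduct.ext'
      intro r a
      have hr : unitB r = r • unitB 1 := by rw [← map_smul, smul_eq_mul, mul_one]
      simp only [LinearMap.comp_apply, map_tmul, LinearMap.id_apply, LinearEquiv.coe_coe,
        TensorProduct.comm_tmul, hr]
      rw [← smul_tmul', map_smul, show τ (unitB 1 ⊗ₜ[k] a) = a ⊗ₜ[k] unitB 1 from e2 a,
        tmul_smul]
    · apply TensorProduct.ext_fourfold'
      intro b b' a a'
      simp only [LinearMap.comp_apply, map_tmul, midMap_tmul_s2]
      rw [MainAux hA hB e2 assocE b a' (τ.toLinearMap (b' ⊗ₜ a)),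
        c1fwd hA hB (mulB (b ⊗ₜ b')) (mulA (a ⊗ₜ a')), ← c2fwd hA e1 b b',
        ← c3fwd hB e2 a a', assocE, ← assocE ((unitA 1) ⊗ₜ b') (a ⊗ₜ unitB 1),
        ← c1fwd hA hB b' a]
  · -- twisting ⇒ unital associative
    intro Tw
    have e1 : ∀ b : B, τ.toLinearMap (b ⊗ₜ unitA 1) = unitA 1 ⊗ₜ b :=
      tau_oneA Tw.1
    have e2 : ∀ a : A, τ.toLinearMap (unitB 1 ⊗ₜ a) = a ⊗ₜ unitB 1 :=
      tau_oneB Tw.2.1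
    have hu1 : tUnit k unitA unitB 1 = unitA 1 ⊗ₜ unitB 1 := by
      simp [tUnit]
    have haL : ∀ a : A, mulA (unitA 1 ⊗ₜ a) = a := fun a => by
      simpa using LinearMap.congr_fun hA.1 a
    have haR : ∀ a : A, mulA (a ⊗ₜ unitA 1) = a := fun a => by
      simpa using LinearMap.congr_fun hA.2.1 a
    have hbL : ∀ b : B, mulB (unitB 1 ⊗ₜ b) = b := fun b => by
      simpa using LinearMap.congr_fun hB.1 b
    have hbR : ∀ b : B, mulB (b ⊗ₜ unitB 1) = b := fun b => by
      simpa using LinearMap.congr_fun hB.2.1 b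
    refine ⟨?_, ?_, ?_⟩
    · apply TensorProduct.ext'
      intro a b
      simp only [LinearMap.comp_apply, LinearEquiv.coe_coe, TensorProduct.lid_symm_apply,
        map_tmul, LinearMap.id_apply, hu1]
      rw [tMul_tmul, e2 a]
      simp [haL, hbL]
    · apply TensorProduct.ext'
      intro a b
      simp only [LinearMap.comp_apply, LinearEquiv.coe_coe, TensorProduct.rid_symm_apply,
        map_tmul, LinearMap.id_apply, hu1]
      rw [tMul_tmul, e1 b]
      simp [haR, hbR]
    · apply TensorProduct.ext_threefold
      intro x y z
      simp only [LinearMap.comp_apply, map_tmul, LinearMap.id_apply, LinearEquiv.coe_coe,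
        TensorProduct.assoc_tmul]
      induction x using TensorProduct.induction_on with
      | zero => simp [zero_tmul]
      | add s t hs ht => simp only [add_tmul, map_add, hs, ht]
      | tmul a b =>
        induction y using TensorProduct.induction_on with
        | zero => simp [zero_tmul, tmul_zero]
        | add s t hs ht => simp only [add_tmul, tmul_add, map_add, hs, ht]
        | tmul a' b' =>
          induction z using TensorProduct.induction_on with
          | zero => simp [tmul_zero]
          | add s t hs ht => simp only [tmul_add, map_add, hs, ht]
          | tmul a'' b'' =>
            rw [tMul_tmul mulA mulB τ.toLinearMap a b a' b',
              StepA hA hB e1 Tw.2.2 a b' a'' b'' (τ.toLinearMap (b ⊗ₜ a')),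
              tMul_tmul mulA mulB τ.toLinearMap a' b' a'' b'',
              StepB hA hB e2 Tw.2.2 a b a' b'' (τ.toLinearMap (b' ⊗ₜ a''))]
end

section
/- Let A and B be Hopf algebras over k and let τ : B⊗A → A⊗B be a twisting map that is not the flip b⊗a ↦ a⊗b, satisfying the comultiplication-compatibility condition (Δ_A⊗Δ_B)∘τ = (1_A⊗τ⊗1_B)∘(τ⊗τ)∘(1_B⊗τ⊗1_A)∘(Δ_B⊗Δ_A). Then the twisted tensor product A⊗_τ B, with its induced multiplication, unit, comultiplication and counit, is not a Hopf algebra. -/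
open scoped TensorProduct

namespace TTP

section Aux


variable {k : Type*} [Field k]
variable {X P Q Y R S R' S' M N : Type*}
  [AddCommGroup X] [Module k X] [AddCommGroup P] [Module k P]
  [AddCommGroup Q] [Module k Q] [AddCommGroup Y] [Module k Y]
  [AddCommGroup R] [Module k R] [AddCommGroup S] [Module k S]
  [AddCommGroup R'] [Module k R'] [AddCommGroup S'] [Module k S']
  [AddCommGroup M] [Module k M] [AddCommGroup N] [Module k N]

lemma midMap_apply (f : P ⊗[k] Q →ₗ[k] R ⊗[k] S) (x : X) (p : P) (q : Q) (y : Y) :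
    midMap k f ((x ⊗ₜ p) ⊗ₜ (q ⊗ₜ y))
      = TensorProduct.map (TensorProduct.mk k X R x) ((TensorProduct.mk k S Y).flip y)
          (f (p ⊗ₜ q)) := by
  simp only [midMap, LinearMap.coe_comp, Function.comp_apply, LinearEquiv.coe_coe,
    TensorProduct.assoc_symm_tmul, TensorProduct.map_tmul, TensorProduct.assoc_tmul,
    LinearMap.id_coe, id_eq]
  induction f (p ⊗ₜ q) using TensorProduct.induction_on with
  | zero => simp
  | tmul r s => simp [TensorProduct.mk_apply]
  | add u v hu hv => simp only [map_add, TensorProduct.tmul_add, TensorProduct.add_tmul, hu, hv]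

lemma midMap_midMap (f : R ⊗[k] S →ₗ[k] R' ⊗[k] S') (g : P ⊗[k] Q →ₗ[k] R ⊗[k] S) :
    (midMap k f : (X ⊗[k] R) ⊗[k] (S ⊗[k] Y) →ₗ[k] _) ∘ₗ midMap k g = midMap k (f ∘ₗ g) := by
  apply TensorProduct.ext_fourfold'
  intro x p q y
  simp only [LinearMap.coe_comp, Function.comp_apply, midMap_apply]
  induction g (p ⊗ₜ q) using TensorProduct.induction_on with
  | zero => simp
  | tmul r s => simp [midMap_apply]
  | add u v hu hv => simp only [map_add, hu, hv]

lemma midMap_id :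
    (midMap k (LinearMap.id : P ⊗[k] Q →ₗ[k] P ⊗[k] Q) :
      (X ⊗[k] P) ⊗[k] (Q ⊗[k] Y) →ₗ[k] _) = LinearMap.id := by
  apply TensorProduct.ext_fourfold'
  intro x p q y
  simp [midMap_apply]

lemma collapse_mk (φ : X →ₗ[k] k) (ψ : Y →ₗ[k] k) (x : X) (y : Y) :
    (TensorProduct.map
        ((TensorProduct.lid k R).toLinearMap ∘ₗ TensorProduct.map φ LinearMap.id)
        ((TensorProduct.rid k S).toLinearMap ∘ₗ TensorProduct.map LinearMap.id ψ))
      ∘ₗ TensorProduct.map (TensorProduct.mk k X R x) ((TensorProduct.mk k S Y).flip y)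
    = (φ x * ψ y) • (LinearMap.id : R ⊗[k] S →ₗ[k] R ⊗[k] S) := by
  apply TensorProduct.ext'
  intro r s
  simp only [LinearMap.coe_comp, Function.comp_apply, TensorProduct.map_tmul,
    TensorProduct.mk_apply, LinearMap.flip_apply, LinearEquiv.coe_coe,
    TensorProduct.lid_tmul, TensorProduct.rid_tmul, LinearMap.id_coe, id_eq,
    LinearMap.smul_apply]
  simp only [TensorProduct.tmul_smul, TensorProduct.smul_tmul', smul_smul]
  rw [mul_comm]

lemma counit_midMap (f : P ⊗[k] Q →ₗ[k] R ⊗[k] S) (φ : X →ₗ[k] k) (ψ : Y →ₗ[k] k) :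
    (TensorProduct.map
        ((TensorProduct.lid k R).toLinearMap ∘ₗ TensorProduct.map φ LinearMap.id)
        ((TensorProduct.rid k S).toLinearMap ∘ₗ TensorProduct.map LinearMap.id ψ))
      ∘ₗ midMap k f
    = f ∘ₗ (TensorProduct.map
        ((TensorProduct.lid k P).toLinearMap ∘ₗ TensorProduct.map φ LinearMap.id)
        ((TensorProduct.rid k Q).toLinearMap ∘ₗ TensorProduct.map LinearMap.id ψ)) := by
  apply TensorProduct.ext_fourfold'
  intro x p q y
  simp only [LinearMap.coe_comp, Function.comp_apply, midMap_apply, TensorProduct.map_tmul,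
    LinearMap.id_coe, id_eq, LinearEquiv.coe_coe, TensorProduct.lid_tmul, TensorProduct.rid_tmul]
  rw [← LinearMap.comp_apply, collapse_mk]
  simp only [LinearMap.smul_apply, LinearMap.id_coe, id_eq, TensorProduct.smul_tmul',
    TensorProduct.tmul_smul, map_smul, smul_smul]
  rw [← TensorProduct.smul_tmul', map_smul, mul_comm]

lemma midMap_comm_nat (g : P →ₗ[k] M) (h : Q →ₗ[k] N) :
    midMap k (TensorProduct.comm k M N).toLinearMap
        ∘ₗ TensorProduct.map (TensorProduct.map g g) (TensorProduct.map h h)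
    = TensorProduct.map (TensorProduct.map g h) (TensorProduct.map g h)
        ∘ₗ midMap k (TensorProduct.comm k P Q).toLinearMap := by
  apply TensorProduct.ext_fourfold'
  intro p₁ p₂ q₁ q₂
  simp [midMap_apply]

end Aux

end TTP

open TTP in
/-- Corollary 4.6 of the paper: a twisted tensor product of Hopf
algebras along a non-trivial comultiplication-compatible twisting map is not a
Hopf algebra. -/
theorem twistedTensorProduct_nontrivial_not_hopf
    {k A B : Type*} [Field k]
    [AddCommGroup A] [Module k A] [AddCommGroup B] [Module k B]
    (mulA : A ⊗[k] A →ₗ[k] A) (unitA : k →ₗ[k] A)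
    (comulA : A →ₗ[k] A ⊗[k] A) (counitA : A →ₗ[k] k)
    (mulB : B ⊗[k] B →ₗ[k] B) (unitB : k →ₗ[k] B)
    (comulB : B →ₗ[k] B ⊗[k] B) (counitB : B →ₗ[k] k)
    (hA : IsHopf k mulA unitA comulA counitA)
    (hB : IsHopf k mulB unitB comulB counitB)
    (τ : B ⊗[k] A ≃ₗ[k] A ⊗[k] B)
    (hτ : IsTwisting k mulA unitA mulB unitB τ.toLinearMap)
    (hnontriv : τ ≠ TensorProduct.comm k B A)
    (hcompat : ComulCompat k comulA comulB τ.toLinearMap) :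
    ¬ IsHopf k (tMul k mulA mulB τ.toLinearMap) (tUnit k unitA unitB)
        (tComul k comulA comulB τ.symm.toLinearMap) (tCounit k counitA counitB) := by
  intro H
  apply hnontriv
  apply LinearEquiv.toLinearMap_injective
  set jB : B →ₗ[k] A ⊗[k] B :=
    TensorProduct.map unitA LinearMap.id ∘ₗ (TensorProduct.lid k B).symm.toLinearMap with hjB
  set jA : A →ₗ[k] A ⊗[k] B :=
    TensorProduct.map LinearMap.id unitB ∘ₗ (TensorProduct.rid k A).symm.toLinearMap with hjA
  have jB_apply : ∀ b : B, jB b = unitA 1 ⊗ₜ b := by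
    intro b; simp [hjB]
  have jA_apply : ∀ a : A, jA a = a ⊗ₜ unitB 1 := by
    intro a; simp [hjA]
  have mulA_unit : ∀ r : A, mulA (unitA 1 ⊗ₜ r) = r := by
    intro r
    have h := LinearMap.congr_fun hA.1.1.1 r
    simpa using h
  have mulB_unit : ∀ s : B, mulB (s ⊗ₜ unitB 1) = s := by
    intro s
    have h := LinearMap.congr_fun hB.1.1.2.1 s
    simpa using h
  have comulA_unit : comulA (unitA 1) = unitA 1 ⊗ₜ unitA 1 := by
    have h := LinearMap.congr_fun hA.1.2.2.2.1 (1 : k)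
    simpa using h
  have comulB_unit : comulB (unitB 1) = unitB 1 ⊗ₜ unitB 1 := by
    have h := LinearMap.congr_fun hB.1.2.2.2.1 (1 : k)
    simpa using h
  have τ_unitA : ∀ b : B, τ (b ⊗ₜ unitA 1) = unitA 1 ⊗ₜ b := by
    intro b
    have h := LinearMap.congr_fun hτ.1 (b ⊗ₜ (1 : k))
    simpa using h
  have τ_unitB : ∀ a : A, τ (unitB 1 ⊗ₜ a) = a ⊗ₜ unitB 1 := by
    intro a
    have h := LinearMap.congr_fun hτ.2.1 ((1 : k) ⊗ₜ a)
    simpa using h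
  have τs_unitA : ∀ b : B, τ.symm (unitA 1 ⊗ₜ b) = b ⊗ₜ unitA 1 := by
    intro b; rw [← τ_unitA b, LinearEquiv.symm_apply_apply]
  have τs_unitB : ∀ a : A, τ.symm (a ⊗ₜ unitB 1) = unitB 1 ⊗ₜ a := by
    intro a; rw [← τ_unitB a, LinearEquiv.symm_apply_apply]
  have hmulAu : mulA ∘ₗ TensorProduct.mk k A A (unitA 1) = LinearMap.id := by
    apply LinearMap.ext; intro r; simpa using mulA_unit r
  have hmulBv : mulB ∘ₗ (TensorProduct.mk k B B).flip (unitB 1) = LinearMap.id := by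
    apply LinearMap.ext; intro s; simpa using mulB_unit s
  have tMul_j : ∀ (b : B) (a : A),
      tMul k mulA mulB τ.toLinearMap (jB b ⊗ₜ jA a) = τ (b ⊗ₜ a) := by
    intro b a
    rw [jB_apply, jA_apply]
    simp only [tMul, LinearMap.coe_comp, Function.comp_apply, midMap_apply,
      LinearEquiv.coe_coe]
    rw [← LinearMap.comp_apply, ← TensorProduct.map_comp, hmulAu, hmulBv,
      TensorProduct.map_id, LinearMap.id_apply]
  have tMul_j' : tMul k mulA mulB τ.toLinearMap ∘ₗ TensorProduct.map jB jA
      = τ.toLinearMap := by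
    apply TensorProduct.ext'
    intro b a
    simpa using tMul_j b a
  have tComul_jB : ∀ b : B,
      tComul k comulA comulB τ.symm.toLinearMap (jB b)
        = TensorProduct.map jB jB (comulB b) := by
    intro b
    rw [jB_apply]
    simp only [tComul, LinearMap.coe_comp, Function.comp_apply, TensorProduct.map_tmul,
      comulA_unit]
    induction comulB b using TensorProduct.induction_on with
    | zero => simp
    | tmul b₁ b₂ =>
        rw [midMap_apply]
        simp [τs_unitA, jB_apply]
    | add x y hx hy =>
        simp only [TensorProduct.tmul_add, map_add, hx, hy]
  have tComul_jA : ∀ a : A,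
      tComul k comulA comulB τ.symm.toLinearMap (jA a)
        = TensorProduct.map jA jA (comulA a) := by
    intro a
    rw [jA_apply]
    simp only [tComul, LinearMap.coe_comp, Function.comp_apply, TensorProduct.map_tmul,
      comulB_unit]
    induction comulA a using TensorProduct.induction_on with
    | zero => simp
    | tmul a₁ a₂ =>
        rw [midMap_apply]
        simp [τs_unitB, jA_apply]
    | add x y hx hy =>
        simp only [TensorProduct.add_tmul, map_add, hx, hy]
  have hτid : τ.symm.toLinearMap ∘ₗ τ.toLinearMap = LinearMap.id := by
    apply LinearMap.ext; intro x; simp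
  have hmid : ∀ t : (A ⊗[k] B) ⊗[k] (A ⊗[k] B),
      midMap k τ.symm.toLinearMap (midMap k τ.toLinearMap t) = t := by
    intro t
    rw [← LinearMap.comp_apply, midMap_midMap, hτid, midMap_id, LinearMap.id_apply]
  have hmapττ : ∀ t : (B ⊗[k] A) ⊗[k] (B ⊗[k] A),
      TensorProduct.map τ.symm.toLinearMap τ.symm.toLinearMap
        (TensorProduct.map τ.toLinearMap τ.toLinearMap t) = t := by
    intro t
    rw [← LinearMap.comp_apply, ← TensorProduct.map_comp, hτid, TensorProduct.map_id,
      LinearMap.id_apply]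
  apply TensorProduct.ext'
  intro b a
  have E := H.1.2.2.2.2.2
  have e1 := LinearMap.congr_fun E (jB b ⊗ₜ jA a)
  simp only [LinearMap.coe_comp, Function.comp_apply] at e1
  have hcc := LinearMap.congr_fun hcompat (b ⊗ₜ a)
  simp only [LinearMap.coe_comp, Function.comp_apply, TensorProduct.map_tmul,
    LinearEquiv.coe_coe] at hcc
  have lhs_eq : tComul k comulA comulB τ.symm.toLinearMap
        (tMul k mulA mulB τ.toLinearMap (jB b ⊗ₜ jA a))
      = TensorProduct.map τ.toLinearMap τ.toLinearMap
          (midMap k τ.toLinearMap (comulB b ⊗ₜ comulA a)) := by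
    rw [tMul_j b a]
    simp only [tComul, LinearMap.coe_comp, Function.comp_apply]
    rw [hcc, hmid]
  have hnat := LinearMap.congr_fun
    (midMap_comm_nat (k := k) (M := A ⊗[k] B) (N := A ⊗[k] B) jB jA)
    (comulB b ⊗ₜ comulA a)
  simp only [LinearMap.coe_comp, Function.comp_apply, TensorProduct.map_tmul] at hnat
  have hmm : ∀ s : (B ⊗[k] A) ⊗[k] (B ⊗[k] A),
      TensorProduct.map (tMul k mulA mulB τ.toLinearMap) (tMul k mulA mulB τ.toLinearMap)
        (TensorProduct.map (TensorProduct.map jB jA) (TensorProduct.map jB jA) s)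
      = TensorProduct.map τ.toLinearMap τ.toLinearMap s := by
    intro s
    rw [← LinearMap.comp_apply, ← TensorProduct.map_comp, tMul_j']
  have rhs_eq : TensorProduct.map (tMul k mulA mulB τ.toLinearMap)
        (tMul k mulA mulB τ.toLinearMap)
        (midMap k (TensorProduct.comm k (A ⊗[k] B) (A ⊗[k] B)).toLinearMap
          (TensorProduct.map (tComul k comulA comulB τ.symm.toLinearMap)
            (tComul k comulA comulB τ.symm.toLinearMap) (jB b ⊗ₜ jA a)))
      = TensorProduct.map τ.toLinearMap τ.toLinearMap
          (midMap k (TensorProduct.comm k B A).toLinearMap (comulB b ⊗ₜ comulA a)) := by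
    rw [TensorProduct.map_tmul, tComul_jB b, tComul_jA a, hnat, hmm]
  rw [lhs_eq, rhs_eq] at e1
  have e2 : midMap k τ.toLinearMap (comulB b ⊗ₜ[k] comulA a)
      = midMap k (TensorProduct.comm k B A).toLinearMap (comulB b ⊗ₜ[k] comulA a) := by
    have h := congrArg
      (TensorProduct.map τ.symm.toLinearMap τ.symm.toLinearMap) e1
    rwa [hmapττ, hmapττ] at h
  have hq1 := LinearMap.congr_fun
    (counit_midMap (k := k) τ.toLinearMap counitB counitA) (comulB b ⊗ₜ comulA a)
  have hq2 := LinearMap.congr_fun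
    (counit_midMap (k := k) (TensorProduct.comm k B A).toLinearMap counitB counitA)
    (comulB b ⊗ₜ comulA a)
  simp only [LinearMap.coe_comp, Function.comp_apply, TensorProduct.map_tmul,
    LinearEquiv.coe_coe] at hq1 hq2
  have pb : (TensorProduct.lid k B) (TensorProduct.map counitB LinearMap.id (comulB b))
      = b := by
    have h := LinearMap.congr_fun hB.1.2.1.1 b
    simpa using h
  have pa : (TensorProduct.rid k A) (TensorProduct.map LinearMap.id counitA (comulA a))
      = a := by
    have h := LinearMap.congr_fun hA.1.2.1.2.1 a
    simpa using h
  rw [pb, pa] at hq1 hq2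
  rw [e2, hq2] at hq1
  simpa using hq1.symm
end
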